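/- arXiv:1912.04546 — 2 statements merged into one kernel-verified Lean document; each statement's English description precedes it below -/
import Mathlib

section
/- Let A ⊆ B be a compatible pair of finite pre-von Neumann algebras admitting a conditional-expectation-like map E_A : B → A, with H_B, Γ, Ω, H_A, λ_A, λ_B, M_A, M_B as in the context, and let e_A be the orthogonal projection of H_B onto H_A. Then for every x ∈ M_B there exists a unique y ∈ M_A such that e_A x e_A ξ = y(e_A ξ) for all ξ ∈ H_B. Writing y = 𝔼_A(x), the map 𝔼_A : M_B → M_A is linear, unital, satisfies 𝔼_A(x*) = 𝔼_A(x)*, and is trace-preserving in the sense that ⟨𝔼_A(x)Γ(a), Ω⟩_{H_A} = ⟨xΓ(a), Ω⟩_{H_B} for all x ∈ M_B and a ∈ A. -/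
/-!
Write `Ω = Γ 1`, `ρ(b)` for right multiplication by `b` and `J` for the conjugate-linear
involution `Γ b ↦ Γ (star b)`. Since `x ∈ M_B` commutes with every `ρ(b)`, the trace property
makes `Ω` a trace vector: `x* Ω = J x Ω`. Symmetrically, an operator `z` on `H_A` commuting with
`λ_A(A)` satisfies `z Γ(a) = λ(a) z Ω` and `z Ω = J z* Ω`. Pairing `z e_A x e_A Γ(a)` and
`e_A x e_A z Γ(a)` with `Γ(a')` and moving `λ`, `ρ` and `J` across the inner product turns both
into `⟪ρ(a*) z* Ω, λ(a'*) x Ω⟫`, so the compression `e_A x e_A` lies in `M_A`. Uniqueness,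
linearity, unitality, the star property and the trace property are then properties of the
compression.
-/

def doubleCommutant {E : Type*} [NormedAddCommGroup E] [InnerProductSpace ℂ E]
    (S : Set (E →L[ℂ] E)) : Set (E →L[ℂ] E) :=
  Set.centralizer (Set.centralizer S)

open ContinuousLinearMap (adjoint)
open scoped InnerProductSpace

theorem star_mem_doubleCommutant {E : Type*} [NormedAddCommGroup E] [InnerProductSpace ℂ E]
    [CompleteSpace E] {S : Set (E →L[ℂ] E)} (hS : ∀ s ∈ S, star s ∈ S) {x : E →L[ℂ] E}
    (hx : x ∈ doubleCommutant S) : star x ∈ doubleCommutant S :=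
  Set.star_mem_centralizer' (fun _ hy => Set.star_mem_centralizer' hS hy) hx

namespace Submodule

variable {E : Type*} [NormedAddCommGroup E] [InnerProductSpace ℂ E] (K : Submodule ℂ E)

/-- The compression `e_K x e_K` of `x`, as an operator on `K`. -/
noncomputable def compression [K.HasOrthogonalProjection] (x : E →L[ℂ] E) : K →L[ℂ] K :=
  K.orthogonalProjectionOnto ∘L x ∘L K.subtypeL

section

variable [K.HasOrthogonalProjection]

theorem compression_apply (x : E →L[ℂ] E) (k : K) :
    K.compression x k = K.orthogonalProjectionOnto (x k) :=
  rfl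

theorem inner_compression_apply (x : E →L[ℂ] E) (u v : K) :
    ⟪u, K.compression x v⟫_ℂ = ⟪(u : E), x v⟫_ℂ :=
  inner_orthogonalProjectionOnto_eq_of_mem_left _ _

theorem compression_add (x y : E →L[ℂ] E) :
    K.compression (x + y) = K.compression x + K.compression y := by
  ext; simp [compression_apply]

theorem compression_smul (c : ℂ) (x : E →L[ℂ] E) :
    K.compression (c • x) = c • K.compression x := by
  ext; simp [compression_apply]

theorem compression_one : K.compression 1 = 1 := by
  ext; simp [compression_apply]

theorem eq_compression_of_forall {x : E →L[ℂ] E} {y : K →L[ℂ] K}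
    (h : ∀ ξ, K.orthogonalProjectionOnto (x (K.orthogonalProjectionOnto ξ : E)) =
      y (K.orthogonalProjectionOnto ξ)) : y = K.compression x := by
  ext1 k
  simpa [compression_apply] using (h k).symm

end

theorem adjoint_compression [CompleteSpace E] [CompleteSpace K] (x : E →L[ℂ] E) :
    adjoint (K.compression x) = K.compression (adjoint x) := by
  simp only [compression, ContinuousLinearMap.adjoint_comp, adjoint_subtypeL,
    adjoint_orthogonalProjectionOnto, ContinuousLinearMap.comp_assoc]

end Submodule

/-- The GNS space of a trace `t` on `B` (`H_B`, `Γ`, `λ_B` in the paper's notation). -/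
structure TracialGNS (B H : Type*) [Ring B] [Algebra ℂ B] [StarRing B]
    [NormedAddCommGroup H] [InnerProductSpace ℂ H] where
  t : B →ₗ[ℂ] ℂ
  Γ : B →ₗ[ℂ] H
  lam : B → H →L[ℂ] H
  trace_mul_comm : ∀ b₁ b₂ : B, t (b₁ * b₂) = t (b₂ * b₁)
  inner_Γ_Γ : ∀ b₁ b₂ : B, ⟪Γ b₁, Γ b₂⟫_ℂ = t (star b₁ * b₂)
  denseRange_Γ : DenseRange Γ
  lam_Γ : ∀ b b' : B, lam b (Γ b') = Γ (b * b')

namespace TracialGNS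

variable {B H : Type*} [Ring B] [Algebra ℂ B] [StarRing B]
  [NormedAddCommGroup H] [InnerProductSpace ℂ H] (S : TracialGNS B H)

theorem ext_Γ {σ : ℂ →+* ℂ} {F : Type*} [TopologicalSpace F] [AddCommMonoid F] [Module ℂ F]
    [T2Space F] {f g : H →SL[σ] F} (h : ∀ b, f (S.Γ b) = g (S.Γ b)) : f = g :=
  DFunLike.coe_injective (S.denseRange_Γ.equalizer f.continuous g.continuous (funext h))

theorem ext_inner_Γ {f g : H →L[ℂ] H} (h : ∀ c d, ⟪S.Γ d, f (S.Γ c)⟫_ℂ = ⟪S.Γ d, g (S.Γ c)⟫_ℂ) :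
    f = g :=
  S.ext_Γ fun c => S.denseRange_Γ.eq_of_inner_right ℂ (h c)

theorem lam_Γ_one (b : B) : S.lam b (S.Γ 1) = S.Γ b := by
  rw [S.lam_Γ, mul_one]

theorem norm_Γ_star (b : B) : ‖S.Γ (star b)‖ = ‖S.Γ b‖ := by
  have h : ⟪S.Γ (star b), S.Γ (star b)⟫_ℂ = ⟪S.Γ b, S.Γ b⟫_ℂ := by
    rw [S.inner_Γ_Γ, S.inner_Γ_Γ, star_star, S.trace_mul_comm]
  rw [@norm_eq_sqrt_re_inner ℂ, @norm_eq_sqrt_re_inner ℂ, h]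

theorem norm_Γ_mul_le (c a : B) : ‖S.Γ (c * a)‖ ≤ ‖S.lam (star a)‖ * ‖S.Γ c‖ := by
  rw [← S.norm_Γ_star, star_mul, ← S.lam_Γ, ← S.norm_Γ_star c]
  exact (S.lam (star a)).le_opNorm _

section

variable [StarModule ℂ B] {A : StarSubalgebra ℂ B} {K : Submodule ℂ H}

theorem Γ_mem
    (hK : K = (Submodule.map S.Γ (Subalgebra.toSubmodule A.toSubalgebra)).topologicalClosure)
    {a : B} (ha : a ∈ A) : S.Γ a ∈ K :=
  hK ▸ Submodule.le_topologicalClosure _ ⟨a, ha, rfl⟩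

def restrictΓ
    (hK : K = (Submodule.map S.Γ (Subalgebra.toSubmodule A.toSubalgebra)).topologicalClosure)
    (a : A) : K :=
  ⟨S.Γ a, S.Γ_mem hK a.2⟩

variable (hK : K = (Submodule.map S.Γ (Subalgebra.toSubmodule A.toSubalgebra)).topologicalClosure)

@[simp]
theorem coe_restrictΓ (a : A) : (S.restrictΓ hK a : H) = S.Γ a :=
  rfl

theorem denseRange_restrictΓ : DenseRange (S.restrictΓ hK) := by
  refine Topology.IsInducing.subtypeVal.dense_iff.mpr fun ξ => ?_
  have hξ : (ξ : H) ∈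
      (Submodule.map S.Γ (Subalgebra.toSubmodule A.toSubalgebra)).topologicalClosure := hK ▸ ξ.2
  rw [← SetLike.mem_coe, Submodule.topologicalClosure_coe] at hξ
  rw [← Set.range_comp]
  convert hξ using 2
  rw [Submodule.map_coe, Set.image_eq_range]
  rfl

theorem ext_restrictΓ {f g : K →L[ℂ] K} (h : ∀ a, f (S.restrictΓ hK a) = g (S.restrictΓ hK a)) :
    f = g :=
  DFunLike.coe_injective
    ((S.denseRange_restrictΓ hK).equalizer f.continuous g.continuous (funext h))

theorem coe_apply_restrictΓ_of_mem_centralizer {lamA : B → K →L[ℂ] K}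
    (hlamA : ∀ a ∈ A, ∀ ξ : K, (lamA a ξ : H) = S.lam a ξ) {z : K →L[ℂ] K}
    (hz : z ∈ Set.centralizer (lamA '' A)) (a : A) :
    (z (S.restrictΓ hK a) : H) = S.lam a (z (S.restrictΓ hK 1)) := by
  have h : S.restrictΓ hK a = lamA a (S.restrictΓ hK 1) :=
    Subtype.ext (by
      rw [hlamA a a.2, coe_restrictΓ, coe_restrictΓ, OneMemClass.coe_one, S.lam_Γ_one])
  rw [h, ← mul_apply_eq_comp, ← hz _ ⟨a, a.2, rfl⟩, mul_apply_eq_comp, hlamA a a.2]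

end

variable [CompleteSpace H]

theorem adjoint_lam (b : B) : adjoint (S.lam b) = S.lam (star b) :=
  S.ext_inner_Γ fun c d => by
    rw [ContinuousLinearMap.adjoint_inner_right, S.lam_Γ, S.lam_Γ, S.inner_Γ_Γ, S.inner_Γ_Γ,
      star_mul, mul_assoc]

theorem inner_lam_left (b : B) (u v : H) : ⟪S.lam b u, v⟫_ℂ = ⟪u, S.lam (star b) v⟫_ℂ := by
  rw [← S.adjoint_lam, ContinuousLinearMap.adjoint_inner_right]

theorem star_mem_doubleCommutant_range_lam {x : H →L[ℂ] H}
    (hx : x ∈ doubleCommutant (Set.range S.lam)) : star x ∈ doubleCommutant (Set.range S.lam) := by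
  refine star_mem_doubleCommutant ?_ hx
  rintro _ ⟨b, rfl⟩
  exact ⟨star b, by rw [ContinuousLinearMap.star_eq_adjoint, S.adjoint_lam]⟩

noncomputable def rightMul (a : B) : H →L[ℂ] H :=
  (S.Γ ∘ₗ LinearMap.mulRight ℂ a).extendOfNorm S.Γ

theorem rightMul_Γ (a c : B) : S.rightMul a (S.Γ c) = S.Γ (c * a) :=
  LinearMap.extendOfNorm_eq S.denseRange_Γ ⟨_, (S.norm_Γ_mul_le · a)⟩ c

theorem rightMul_Γ_one (b : B) : S.rightMul b (S.Γ 1) = S.Γ b := by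
  rw [S.rightMul_Γ, one_mul]

theorem adjoint_rightMul (b : B) : adjoint (S.rightMul b) = S.rightMul (star b) :=
  S.ext_inner_Γ fun c d => by
    rw [ContinuousLinearMap.adjoint_inner_right, S.rightMul_Γ, S.rightMul_Γ, S.inner_Γ_Γ,
      S.inner_Γ_Γ, star_mul, S.trace_mul_comm (star b * star d), S.trace_mul_comm (star d),
      mul_assoc]

theorem inner_rightMul_left (b : B) (u v : H) :
    ⟪S.rightMul b u, v⟫_ℂ = ⟪u, S.rightMul (star b) v⟫_ℂ := by
  rw [← S.adjoint_rightMul, ContinuousLinearMap.adjoint_inner_right]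

theorem inner_rightMul_right (b : B) (u v : H) :
    ⟪u, S.rightMul b v⟫_ℂ = ⟪S.rightMul (star b) u, v⟫_ℂ := by
  rw [S.inner_rightMul_left, star_star]

theorem commute_lam_rightMul (b c : B) : Commute (S.lam b) (S.rightMul c) :=
  S.ext_Γ fun d => by
    simp only [mul_apply_eq_comp, S.lam_Γ, S.rightMul_Γ, mul_assoc]

theorem commute_rightMul_of_mem_doubleCommutant {x : H →L[ℂ] H}
    (hx : x ∈ doubleCommutant (Set.range S.lam)) (c : B) : Commute x (S.rightMul c) :=
  (hx _ (by rintro _ ⟨b, rfl⟩; exact (S.commute_lam_rightMul b c).eq)).symm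

variable [StarModule ℂ B] {A : StarSubalgebra ℂ B} {K : Submodule ℂ H}

/-- The modular conjugation `J`. -/
noncomputable def conj : H →L⋆[ℂ] H :=
  (S.Γ.comp (starLinearEquiv ℂ : B ≃ₗ⋆[ℂ] B).toLinearMap).extendOfNorm S.Γ

theorem conj_Γ (b : B) : S.conj (S.Γ b) = S.Γ (star b) :=
  LinearMap.extendOfNorm_eq S.denseRange_Γ ⟨1, fun c => by simp [S.norm_Γ_star]⟩ b

theorem inner_conj_conj (ξ η : H) : ⟪S.conj ξ, S.conj η⟫_ℂ = ⟪η, ξ⟫_ℂ := by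
  have hΓ : ∀ b η, ⟪S.conj (S.Γ b), S.conj η⟫_ℂ = ⟪η, S.Γ b⟫_ℂ := fun b =>
    congrFun (S.denseRange_Γ.equalizer (by fun_prop) (by fun_prop) (funext fun c => by
      simp only [Function.comp_apply, S.conj_Γ, S.inner_Γ_Γ, star_star, S.trace_mul_comm]))
  exact congrFun (S.denseRange_Γ.equalizer (g := fun ξ => ⟪S.conj ξ, S.conj η⟫_ℂ)
    (by fun_prop) (by fun_prop) (funext fun b => hΓ b η)) ξ

theorem lam_conj (b : B) (ξ : H) : S.lam b (S.conj ξ) = S.conj (S.rightMul (star b) ξ) := by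
  have : (S.lam b).comp S.conj = S.conj.comp (S.rightMul (star b)) :=
    S.ext_Γ fun c => by simp [S.conj_Γ, S.lam_Γ, S.rightMul_Γ, star_mul]
  exact congr($this ξ)

theorem rightMul_conj (b : B) (ξ : H) : S.rightMul b (S.conj ξ) = S.conj (S.lam (star b) ξ) := by
  have : (S.rightMul b).comp S.conj = S.conj.comp (S.lam (star b)) :=
    S.ext_Γ fun c => by simp [S.conj_Γ, S.lam_Γ, S.rightMul_Γ, star_mul]
  exact congr($this ξ)

theorem adjoint_apply_Γ_one {x : H →L[ℂ] H} (hx : ∀ c, Commute x (S.rightMul c)) :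
    adjoint x (S.Γ 1) = S.conj (x (S.Γ 1)) := by
  refine S.denseRange_Γ.eq_of_inner_right ℂ fun c => ?_
  calc ⟪S.Γ c, adjoint x (S.Γ 1)⟫_ℂ
      = ⟪x (S.rightMul c (S.Γ 1)), S.Γ 1⟫_ℂ := by
        rw [ContinuousLinearMap.adjoint_inner_right, S.rightMul_Γ_one]
    _ = ⟪x (S.Γ 1), S.Γ (star c)⟫_ℂ := by
        rw [← mul_apply_eq_comp, (hx c).eq, mul_apply_eq_comp, S.inner_rightMul_left,
          S.rightMul_Γ_one]
    _ = ⟪S.Γ c, S.conj (x (S.Γ 1))⟫_ℂ := by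
        rw [← S.inner_conj_conj, S.conj_Γ, star_star]

theorem conj_mem
    (hK : K = (Submodule.map S.Γ (Subalgebra.toSubmodule A.toSubalgebra)).topologicalClosure)
    {ξ : H} (hξ : ξ ∈ K) : S.conj ξ ∈ K := by
  have hKc : IsClosed (K : Set H) := hK ▸ Submodule.isClosed_topologicalClosure _
  have hle : Submodule.map S.Γ (Subalgebra.toSubmodule A.toSubalgebra) ≤
      K.comap S.conj.toLinearMap := by
    rintro _ ⟨a, ha, rfl⟩
    rw [Submodule.mem_comap, ContinuousLinearMap.coe_coe, S.conj_Γ]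
    exact S.Γ_mem hK (star_mem ha)
  rw [hK] at hξ
  exact Submodule.topologicalClosure_minimal _ hle (hKc.preimage S.conj.continuous) hξ

variable {lamA : B → K →L[ℂ] K}

theorem adjoint_lamA [CompleteSpace K] (hlamA : ∀ a ∈ A, ∀ ξ : K, (lamA a ξ : H) = S.lam a ξ)
    {a : B} (ha : a ∈ A) : adjoint (lamA a) = lamA (star a) := by
  refine ((ContinuousLinearMap.eq_adjoint_iff _ _).mpr fun u v => ?_).symm
  rw [Submodule.coe_inner, Submodule.coe_inner, hlamA _ (star_mem ha), hlamA _ ha,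
    S.inner_lam_left, star_star]

theorem adjoint_mem_centralizer_image_lamA [CompleteSpace K]
    (hlamA : ∀ a ∈ A, ∀ ξ : K, (lamA a ξ : H) = S.lam a ξ) {z : K →L[ℂ] K}
    (hz : z ∈ Set.centralizer (lamA '' A)) : adjoint z ∈ Set.centralizer (lamA '' A) := by
  rw [← ContinuousLinearMap.star_eq_adjoint]
  refine Set.star_mem_centralizer' ?_ hz
  rintro _ ⟨a, ha, rfl⟩
  exact ⟨star a, star_mem ha, by rw [ContinuousLinearMap.star_eq_adjoint, S.adjoint_lamA hlamA ha]⟩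

theorem coe_apply_restrictΓ_one_of_mem_centralizer [CompleteSpace K]
    (hK : K = (Submodule.map S.Γ (Subalgebra.toSubmodule A.toSubalgebra)).topologicalClosure)
    (hlamA : ∀ a ∈ A, ∀ ξ : K, (lamA a ξ : H) = S.lam a ξ) {z : K →L[ℂ] K}
    (hz : z ∈ Set.centralizer (lamA '' A)) :
    (z (S.restrictΓ hK 1) : H) = S.conj (adjoint z (S.restrictΓ hK 1)) := by
  have hmem : S.conj (adjoint z (S.restrictΓ hK 1) : H) ∈ K :=
    S.conj_mem hK (Submodule.coe_mem _)
  refine congrArg Subtype.val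
    ((S.denseRange_restrictΓ hK).eq_of_inner_right ℂ (y := ⟨_, hmem⟩) fun a => ?_)
  calc ⟪S.restrictΓ hK a, z (S.restrictΓ hK 1)⟫_ℂ
      = ⟪S.lam a (S.Γ 1), (z (S.restrictΓ hK 1) : H)⟫_ℂ := by
        rw [S.lam_Γ_one]
        rfl
    _ = ⟪S.restrictΓ hK 1, z (S.restrictΓ hK (star a))⟫_ℂ := by
        rw [S.inner_lam_left, Submodule.coe_inner,
          S.coe_apply_restrictΓ_of_mem_centralizer hK hlamA hz (star a)]
        rfl
    _ = ⟪(adjoint z (S.restrictΓ hK 1) : H), S.Γ (star a)⟫_ℂ :=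
        (z.adjoint_inner_left _ _).symm
    _ = ⟪(S.Γ a : H), S.conj (adjoint z (S.restrictΓ hK 1))⟫_ℂ := by
        rw [← S.inner_conj_conj, S.conj_Γ, star_star]

theorem compression_mem_doubleCommutant [CompleteSpace K]
    (hK : K = (Submodule.map S.Γ (Subalgebra.toSubmodule A.toSubalgebra)).topologicalClosure)
    (hlamA : ∀ a ∈ A, ∀ ξ : K, (lamA a ξ : H) = S.lam a ξ) {x : H →L[ℂ] H}
    (hx : x ∈ doubleCommutant (Set.range S.lam)) :
    K.compression x ∈ doubleCommutant (lamA '' A) := by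
  intro z hz
  have hxρ := S.commute_rightMul_of_mem_doubleCommutant hx
  have hx'ρ := S.commute_rightMul_of_mem_doubleCommutant
    (ContinuousLinearMap.star_eq_adjoint x ▸ S.star_mem_doubleCommutant_range_lam hx)
  set ζ : H := (adjoint z (S.restrictΓ hK 1) : H)
  refine S.ext_restrictΓ hK fun a =>
    (S.denseRange_restrictΓ hK).eq_of_inner_right ℂ fun a' => ?_
  have hzT : ⟪S.restrictΓ hK a', (z * K.compression x) (S.restrictΓ hK a)⟫_ℂ =
      ⟪S.rightMul (star a) ζ, S.lam (star a') (x (S.Γ 1))⟫_ℂ := by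
    calc _ = ⟪(adjoint z (S.restrictΓ hK a') : H), x (S.rightMul a (S.Γ 1))⟫_ℂ := by
          rw [mul_apply_eq_comp, ← ContinuousLinearMap.adjoint_inner_left,
            Submodule.inner_compression_apply, S.rightMul_Γ_one]
          rfl
      _ = ⟪S.lam a' (S.rightMul (star a) ζ), x (S.Γ 1)⟫_ℂ := by
          rw [S.coe_apply_restrictΓ_of_mem_centralizer hK hlamA
              (S.adjoint_mem_centralizer_image_lamA hlamA hz),
            ← mul_apply_eq_comp, (hxρ a).eq, mul_apply_eq_comp, S.inner_rightMul_right,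
            ← mul_apply_eq_comp, ← (S.commute_lam_rightMul _ _).eq, mul_apply_eq_comp]
      _ = _ := S.inner_lam_left _ _ _
  have hTz : ⟪S.restrictΓ hK a', (K.compression x * z) (S.restrictΓ hK a)⟫_ℂ =
      ⟪S.rightMul (star a) ζ, S.lam (star a') (x (S.Γ 1))⟫_ℂ := by
    calc _ = ⟪S.Γ a', x (S.lam a (S.conj ζ))⟫_ℂ := by
          rw [mul_apply_eq_comp, Submodule.inner_compression_apply,
            S.coe_apply_restrictΓ_of_mem_centralizer hK hlamA hz,
            S.coe_apply_restrictΓ_one_of_mem_centralizer hK hlamA hz]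
          rfl
      _ = ⟪S.rightMul a' (S.conj (x (S.Γ 1))), S.lam a (S.conj ζ)⟫_ℂ := by
          rw [← S.rightMul_Γ_one, ← ContinuousLinearMap.adjoint_inner_left, ← mul_apply_eq_comp,
            (hx'ρ a').eq, mul_apply_eq_comp, S.adjoint_apply_Γ_one hxρ]
      _ = _ := by rw [S.rightMul_conj, S.lam_conj, S.inner_conj_conj]
  rw [hzT, hTz]

end TracialGNS

theorem stmt_9_general
    {B : Type*} [Ring B] [Algebra ℂ B] [StarRing B] [StarModule ℂ B]
    (A : StarSubalgebra ℂ B)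
    (t : B →ₗ[ℂ] ℂ)
    (httr : ∀ b₁ b₂ : B, t (b₁ * b₂) = t (b₂ * b₁))
    {H : Type*} [NormedAddCommGroup H] [InnerProductSpace ℂ H] [CompleteSpace H]
    -- `H` is the Hilbert space completion `H_B` of `B`, via the canonical map `Γ`:
    (Γ : B →ₗ[ℂ] H)
    (hΓ : ∀ b₁ b₂ : B, (inner ℂ (Γ b₁) (Γ b₂) : ℂ) = t (star b₁ * b₂))
    (hΓdense : DenseRange Γ)
    -- the left regular representation of `B` on `H_B`:
    (lamB : B → H →L[ℂ] H)
    (hlamB : ∀ b b' : B, lamB b (Γ b') = Γ (b * b'))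
    -- `K` is the closed subspace `H_A`, the closure of `Γ(A)` in `H_B`:
    (K : Submodule ℂ H) [CompleteSpace K]
    (hK : K = (Submodule.map Γ (Subalgebra.toSubmodule A.toSubalgebra)).topologicalClosure)
    (hΓA : ∀ a ∈ A, Γ a ∈ K)
    -- the representation `λ_A` of `A` on `H_A`, the restriction of `λ_B`:
    (lamA : B → K →L[ℂ] K)
    (hlamA : ∀ a ∈ A, ∀ ξ : K, ((lamA a ξ : H)) = lamB a (ξ : H)) :
    (∀ x ∈ doubleCommutant (Set.range lamB),
      ∃! y : K →L[ℂ] K, y ∈ doubleCommutant (lamA '' (A : Set B)) ∧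
        ∀ ξ : H, Submodule.orthogonalProjectionOnto K (x ((Submodule.orthogonalProjectionOnto K ξ : K) : H)) =
          y (Submodule.orthogonalProjectionOnto K ξ)) ∧
    (∀ EE : (H →L[ℂ] H) → (K →L[ℂ] K),
      (∀ x ∈ doubleCommutant (Set.range lamB),
        EE x ∈ doubleCommutant (lamA '' (A : Set B)) ∧
        ∀ ξ : H, Submodule.orthogonalProjectionOnto K (x ((Submodule.orthogonalProjectionOnto K ξ : K) : H)) =
          EE x (Submodule.orthogonalProjectionOnto K ξ)) →
      ((∀ x ∈ doubleCommutant (Set.range lamB), ∀ x' ∈ doubleCommutant (Set.range lamB),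
          EE (x + x') = EE x + EE x') ∧
       (∀ (c : ℂ), ∀ x ∈ doubleCommutant (Set.range lamB), EE (c • x) = c • EE x) ∧
       EE 1 = 1 ∧
       (∀ x ∈ doubleCommutant (Set.range lamB), EE (star x) = star (EE x)) ∧
       (∀ x ∈ doubleCommutant (Set.range lamB), ∀ a : B, ∀ ha : a ∈ A,
         (inner ℂ (⟨Γ 1, hΓA 1 A.one_mem⟩ : K) (EE x ⟨Γ a, hΓA a ha⟩) : ℂ) =
         (inner ℂ (Γ 1) (x (Γ a)) : ℂ)))) := by
  let S : TracialGNS B H := ⟨t, Γ, lamB, httr, hΓ, hΓdense, hlamB⟩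
  refine ⟨fun x hx => ⟨K.compression x, ⟨S.compression_mem_doubleCommutant hK hlamA hx,
    fun ξ => rfl⟩, fun y hy => K.eq_compression_of_forall hy.2⟩, fun EE hEE => ?_⟩
  have hEE' : ∀ x ∈ doubleCommutant (Set.range lamB), EE x = K.compression x :=
    fun x hx => K.eq_compression_of_forall (hEE x hx).2
  refine ⟨fun x hx x' hx' => ?_, fun c x hx => ?_, ?_, fun x hx => ?_, fun x hx a ha => ?_⟩
  · rw [hEE' _ (Set.add_mem_centralizer hx hx'), hEE' x hx, hEE' x' hx', K.compression_add]
  · rw [hEE' _ (Set.smul_mem_centralizer c hx), hEE' x hx, K.compression_smul]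
  · rw [hEE' 1 Set.one_mem_centralizer, K.compression_one]
  · rw [hEE' _ (S.star_mem_doubleCommutant_range_lam hx), hEE' x hx,
      ContinuousLinearMap.star_eq_adjoint, ContinuousLinearMap.star_eq_adjoint,
      K.adjoint_compression]
  · rw [hEE' x hx, Submodule.inner_compression_apply]

/-- For a compatible pair `A ⊆ B` of finite pre-von Neumann algebras with a
conditional-expectation-like map `E_A : B → A`, for every `x ∈ M_B` there is a unique
`y ∈ M_A` with `e_A x e_A ξ = y (e_A ξ)` for all `ξ ∈ H_B`; writing `y = 𝔼_A(x)`, the map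
`𝔼_A : M_B → M_A` is linear, unital, star-preserving and trace-preserving in the sense that
`⟨𝔼_A(x)Γ(a), Ω⟩_{H_A} = ⟨xΓ(a), Ω⟩_{H_B}` for `x ∈ M_B`, `a ∈ A`.  (Inner products
`⟨v, Ω⟩`, linear in the first variable, are rendered via Mathlib's inner product, linear in
the second variable, as `inner Ω v`.) -/
theorem stmt_9
    {B : Type*} [Ring B] [Algebra ℂ B] [StarRing B] [StarModule ℂ B]
    (A : StarSubalgebra ℂ B)
    (t : B →ₗ[ℂ] ℂ)
    (ht1 : t 1 = 1)
    (httr : ∀ b₁ b₂ : B, t (b₁ * b₂) = t (b₂ * b₁))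
    {H : Type*} [NormedAddCommGroup H] [InnerProductSpace ℂ H] [CompleteSpace H]
    -- `H` is the Hilbert space completion `H_B` of `B`, via the canonical map `Γ`:
    (Γ : B →ₗ[ℂ] H)
    (hΓ : ∀ b₁ b₂ : B, (inner ℂ (Γ b₁) (Γ b₂) : ℂ) = t (star b₁ * b₂))
    (hΓinj : Function.Injective Γ)
    (hΓdense : DenseRange Γ)
    -- the left regular representation of `B` on `H_B`:
    (lamB : B → H →L[ℂ] H)
    (hlamB : ∀ b b' : B, lamB b (Γ b') = Γ (b * b'))
    -- `K` is the closed subspace `H_A`, the closure of `Γ(A)` in `H_B`: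
    (K : Submodule ℂ H) [CompleteSpace K]
    (hK : K = (Submodule.map Γ (Subalgebra.toSubmodule A.toSubalgebra)).topologicalClosure)
    (hΓA : ∀ a ∈ A, Γ a ∈ K)
    -- the representation `λ_A` of `A` on `H_A`, the restriction of `λ_B`:
    (lamA : B → K →L[ℂ] K)
    (hlamA : ∀ a ∈ A, ∀ ξ : K, ((lamA a ξ : H)) = lamB a (ξ : H))
    -- `E_A : B → A` is a conditional-expectation-like map:
    (EA : B →ₗ[ℂ] B)
    (hEAmem : ∀ b : B, EA b ∈ A)
    (hEAid : ∀ a ∈ A, EA a = a)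
    (hEAstar : ∀ b : B, EA (star b) = star (EA b))
    (hEAbimod : ∀ a₁ ∈ A, ∀ a₂ ∈ A, ∀ b : B, EA (a₁ * b * a₂) = a₁ * EA b * a₂)
    (hEAtr : ∀ b : B, t (EA b) = t b) :
    (∀ x ∈ doubleCommutant (Set.range lamB),
      ∃! y : K →L[ℂ] K, y ∈ doubleCommutant (lamA '' (A : Set B)) ∧
        ∀ ξ : H, Submodule.orthogonalProjectionOnto K (x ((Submodule.orthogonalProjectionOnto K ξ : K) : H)) =
          y (Submodule.orthogonalProjectionOnto K ξ)) ∧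
    (∀ EE : (H →L[ℂ] H) → (K →L[ℂ] K),
      (∀ x ∈ doubleCommutant (Set.range lamB),
        EE x ∈ doubleCommutant (lamA '' (A : Set B)) ∧
        ∀ ξ : H, Submodule.orthogonalProjectionOnto K (x ((Submodule.orthogonalProjectionOnto K ξ : K) : H)) =
          EE x (Submodule.orthogonalProjectionOnto K ξ)) →
      ((∀ x ∈ doubleCommutant (Set.range lamB), ∀ x' ∈ doubleCommutant (Set.range lamB),
          EE (x + x') = EE x + EE x') ∧
       (∀ (c : ℂ), ∀ x ∈ doubleCommutant (Set.range lamB), EE (c • x) = c • EE x) ∧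
       EE 1 = 1 ∧
       (∀ x ∈ doubleCommutant (Set.range lamB), EE (star x) = star (EE x)) ∧
       (∀ x ∈ doubleCommutant (Set.range lamB), ∀ a : B, ∀ ha : a ∈ A,
         (inner ℂ (⟨Γ 1, hΓA 1 A.one_mem⟩ : K) (EE x ⟨Γ a, hΓA a ha⟩) : ℂ) =
         (inner ℂ (Γ 1) (x (Γ a)) : ℂ)))) :=
  stmt_9_general A t httr Γ hΓ hΓdense lamB hlamB K hK hΓA lamA hlamA
end

section
/- Let M₁ be a von Neumann algebra on a complex Hilbert space H with a faithful tracial state τ, and let K₀ ⊆ K₁ ⊆ M₁ and M₀ ⊆ M₁ be von Neumann subalgebras with K₀ ⊆ M₀, forming a commuting square: E_{M₀}(x) = E_{K₀}(x) for all x ∈ K₁. Let N ⊆ K₀ and L ⊆ M₀ be von Neumann subalgebras with N ⊆ L, and suppose N'∩K₁ ⊆ L'∩M₁. Assume the τ-preserving conditional expectations onto M₀, K₀, L'∩M₀ and N'∩K₀ exist. Then for every x ∈ N'∩K₁: E_{L'∩M₀}(x) = E_{M₀}(x) = E_{K₀}(x) = E_{N'∩K₀}(x). In particular, the quadruple with top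 row L'∩M₀ ⊆ L'∩M₁ and bottom row N'∩K₀ ⊆ N'∩K₁ is a commuting square. -/
open scoped ComplexOrder

/-- For von Neumann subalgebras `K₀ ⊆ K₁ ⊆ M₁` and `M₀ ⊆ M₁` with `K₀ ⊆ M₀`
forming a commuting square (`E_{M₀} = E_{K₀}` on `K₁`), and `N ⊆ K₀`, `L ⊆ M₀` with `N ⊆ L`
and `N'∩K₁ ⊆ L'∩M₁`, for every `x ∈ N'∩K₁` one has
`E_{L'∩M₀}(x) = E_{M₀}(x) = E_{K₀}(x) = E_{N'∩K₀}(x)`; in particular the quadruple with top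
row `L'∩M₀ ⊆ L'∩M₁` and bottom row `N'∩K₀ ⊆ N'∩K₁` is a commuting square. -/
theorem stmt_17
    {H : Type*} [NormedAddCommGroup H] [InnerProductSpace ℂ H] [CompleteSpace H]
    (M1 M0 K1 K0 N L : VonNeumannAlgebra H)
    (hK0K1 : ∀ x, x ∈ K0 → x ∈ K1) (hK1M1 : ∀ x, x ∈ K1 → x ∈ M1)
    (hM0M1 : ∀ x, x ∈ M0 → x ∈ M1) (hK0M0 : ∀ x, x ∈ K0 → x ∈ M0)
    (hNK0 : ∀ x, x ∈ N → x ∈ K0) (hLM0 : ∀ x, x ∈ L → x ∈ M0)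
    (hNL : ∀ x, x ∈ N → x ∈ L)
    -- `N'∩K₁ ⊆ L'∩M₁`:
    (hrel : ∀ x, (x ∈ K1 ∧ ∀ n ∈ N, x * n = n * x) →
      (x ∈ M1 ∧ ∀ l ∈ L, x * l = l * x))
    (τ : (H →L[ℂ] H) →ₗ[ℂ] ℂ)
    (hτ1 : τ 1 = 1)
    (hτpos : ∀ x ∈ M1, 0 ≤ τ (star x * x))
    (hτfaith : ∀ x ∈ M1, τ (star x * x) = 0 → x = 0)
    (hτtr : ∀ x ∈ M1, ∀ y ∈ M1, τ (x * y) = τ (y * x))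
    -- the `τ`-preserving conditional expectations onto `M₀`, `K₀`, `L'∩M₀`, `N'∩K₀`:
    (EM0 EK0 ELM0 ENK0 : (H →L[ℂ] H) →ₗ[ℂ] (H →L[ℂ] H))
    (hEM0mem : ∀ x ∈ M1, EM0 x ∈ M0)
    (hEM0 : ∀ x ∈ M1, ∀ y ∈ M0, τ (EM0 x * y) = τ (x * y))
    (hEK0mem : ∀ x ∈ M1, EK0 x ∈ K0)
    (hEK0 : ∀ x ∈ M1, ∀ y ∈ K0, τ (EK0 x * y) = τ (x * y))
    (hELM0mem : ∀ x ∈ M1, ELM0 x ∈ M0 ∧ ∀ l ∈ L, ELM0 x * l = l * ELM0 x)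
    (hELM0 : ∀ x ∈ M1, ∀ y, (y ∈ M0 ∧ ∀ l ∈ L, y * l = l * y) →
      τ (ELM0 x * y) = τ (x * y))
    (hENK0mem : ∀ x ∈ M1, ENK0 x ∈ K0 ∧ ∀ n ∈ N, ENK0 x * n = n * ENK0 x)
    (hENK0 : ∀ x ∈ M1, ∀ y, (y ∈ K0 ∧ ∀ n ∈ N, y * n = n * y) →
      τ (ENK0 x * y) = τ (x * y))
    -- the commuting square assumption `E_{M₀} = E_{K₀}` on `K₁`:
    (hcs : ∀ x ∈ K1, EM0 x = EK0 x) :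
    ∀ x, (x ∈ K1 ∧ ∀ n ∈ N, x * n = n * x) →
      ELM0 x = EM0 x ∧ EM0 x = EK0 x ∧ EK0 x = ENK0 x := by

  intro x hx
  obtain ⟨hxK1, hxN⟩ := hx
  have hxM1 : x ∈ M1 := hK1M1 x hxK1
  have cancel : ∀ a : (H →L[ℂ] H), a ∈ M1 → τ (a * star a) = 0 → a = 0 := by
    intro a ha h
    have h2 : star a = 0 := hτfaith (star a) (star_mem ha) (by simpa using h)
    calc a = star (star a) := (star_star a).symm
      _ = 0 := by rw [h2, star_zero]
  have eq_of : ∀ a b : (H →L[ℂ] H), a ∈ M1 → b ∈ M1 →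
      τ (a * star (a - b)) = τ (b * star (a - b)) → a = b := by
    intro a b ha hb h
    have h0 : τ ((a - b) * star (a - b)) = 0 := by
      rw [sub_mul, map_sub, h, sub_self]
    exact sub_eq_zero.mp (cancel (a - b) (sub_mem ha hb) h0)
  have starcomm : ∀ (a : H →L[ℂ] H) (S : VonNeumannAlgebra H),
      (∀ n ∈ S, a * n = n * a) → ∀ n ∈ S, star a * n = n * star a := by
    intro a S h n hn
    have h' := h (star n) (star_mem hn)
    calc star a * n = star (star n * a) := by rw [star_mul, star_star]
      _ = star (a * star n) := by rw [h']
      _ = n * star a := by rw [star_mul, star_star]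
  have hEK0K0 : EK0 x ∈ K0 := hEK0mem x hxM1
  have hEK0M1 : EK0 x ∈ M1 := hK1M1 _ (hK0K1 _ hEK0K0)
  have hNmemM1 : ∀ n ∈ N, n ∈ M1 := fun n hn => hK1M1 _ (hK0K1 _ (hNK0 n hn))
  have hK0memM1 : ∀ k ∈ K0, k ∈ M1 := fun k hk => hK1M1 _ (hK0K1 _ hk)
  have hgen : ∀ n ∈ N, ∀ k ∈ K0, τ (EK0 x * n * k) = τ (n * (EK0 x * k)) := by
    intro n hn k hk
    have hnK0 : n ∈ K0 := hNK0 n hn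
    have hnM1 : n ∈ M1 := hNmemM1 n hn
    have hkM1 : k ∈ M1 := hK0memM1 k hk
    calc τ (EK0 x * n * k) = τ (EK0 x * (n * k)) := by rw [mul_assoc]
      _ = τ (x * (n * k)) := hEK0 x hxM1 (n * k) (mul_mem hnK0 hk)
      _ = τ ((x * n) * k) := by rw [mul_assoc]
      _ = τ ((n * x) * k) := by rw [hxN n hn]
      _ = τ (n * (x * k)) := by rw [mul_assoc]
      _ = τ ((x * k) * n) := hτtr n hnM1 (x * k) (mul_mem hxM1 hkM1)
      _ = τ (x * (k * n)) := by rw [mul_assoc]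
      _ = τ (EK0 x * (k * n)) := (hEK0 x hxM1 (k * n) (mul_mem hk hnK0)).symm
      _ = τ ((EK0 x * k) * n) := by rw [mul_assoc]
      _ = τ (n * (EK0 x * k)) := hτtr (EK0 x * k) (mul_mem hEK0M1 hkM1) n hnM1
  have hcomm : ∀ n ∈ N, EK0 x * n = n * EK0 x := by
    intro n hn
    have hnK0 : n ∈ K0 := hNK0 n hn
    have hnM1 : n ∈ M1 := hNmemM1 n hn
    have hdK0 : star (EK0 x * n - n * EK0 x) ∈ K0 :=
      star_mem (sub_mem (mul_mem hEK0K0 hnK0) (mul_mem hnK0 hEK0K0))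
    refine eq_of _ _ (mul_mem hEK0M1 hnM1) (mul_mem hnM1 hEK0M1) ?_
    calc τ ((EK0 x * n) * star (EK0 x * n - n * EK0 x))
        = τ (n * (EK0 x * star (EK0 x * n - n * EK0 x))) :=
          hgen n hn _ hdK0
      _ = τ ((n * EK0 x) * star (EK0 x * n - n * EK0 x)) := by rw [mul_assoc]
  have h1 : EM0 x = EK0 x := hcs x hxK1
  have hENK0p := hENK0mem x hxM1
  have hENK0M1 : ENK0 x ∈ M1 := hK0memM1 _ hENK0p.1
  have h2 : EK0 x = ENK0 x := by
    set d := star (EK0 x - ENK0 x) with hd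
    have hdiffcomm : ∀ n ∈ N, (EK0 x - ENK0 x) * n = n * (EK0 x - ENK0 x) := by
      intro n hn
      rw [sub_mul, mul_sub, hcomm n hn, hENK0p.2 n hn]
    have hdK0 : d ∈ K0 := star_mem (sub_mem hEK0K0 hENK0p.1)
    have hdcomm : ∀ n ∈ N, d * n = n * d := starcomm _ N hdiffcomm
    refine eq_of _ _ hEK0M1 hENK0M1 ?_
    rw [hEK0 x hxM1 d hdK0, hENK0 x hxM1 d ⟨hdK0, hdcomm⟩]
  have hcommL : ∀ l ∈ L, EK0 x * l = l * EK0 x :=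
    (hrel (EK0 x) ⟨hK0K1 _ hEK0K0, hcomm⟩).2
  have hELM0p := hELM0mem x hxM1
  have h3 : ELM0 x = EM0 x := by
    set d := star (ELM0 x - EM0 x) with hd
    have hbM0 : EM0 x ∈ M0 := hEM0mem x hxM1
    have hbcommL : ∀ l ∈ L, EM0 x * l = l * EM0 x := by
      rw [h1]; exact hcommL
    have hdiffcomm : ∀ l ∈ L, (ELM0 x - EM0 x) * l = l * (ELM0 x - EM0 x) := by
      intro l hl
      rw [sub_mul, mul_sub, hELM0p.2 l hl, hbcommL l hl]
    have hdM0 : d ∈ M0 := star_mem (sub_mem hELM0p.1 hbM0)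
    have hdcomm : ∀ l ∈ L, d * l = l * d := starcomm _ L hdiffcomm
    refine eq_of _ _ (hM0M1 _ hELM0p.1) (hM0M1 _ hbM0) ?_
    rw [hELM0 x hxM1 d ⟨hdM0, hdcomm⟩, hEM0 x hxM1 d hdM0]
  exact ⟨h3, h1, h2⟩
end
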